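/- Let D be a finite distributive lattice and E a finite distributive lattice that is not isomorphic to the congruence lattice of any slim planar semimodular lattice. Then: if D is isomorphic to the congruence lattice of some slim planar semimodular lattice, no (principal lattice) filter of D is isomorphic to E. Equivalently, if some filter of D is isomorphic to E, then D is not isomorphic to the congruence lattice of any slim planar semimodular lattice. -/

import Mathlib

/-!
Congruences of `L` containing `θ` are the congruences of `L / θ`, so the filter `↑θ` of `Con L`
is `Con (L / θ)`, and it suffices that a quotient of a finite slim semimodular lattice is again
slim and semimodular. A surjective lattice homomorphism sends covers to covers or equalities; a
cover `A ⋖ B` of the image lifts to a cover `a ⋖ b` with `a` the top of its fiber, which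
transports semimodularity, and the bottom of the fiber over a join-irreducible element is
join-irreducible, which transports slimness.
-/

/-- A (lattice) congruence of `L`: an equivalence relation compatible with `⊔` and `⊓`. -/
def LatCon (L : Type) [Lattice L] : Type :=
  {s : Setoid L // ∀ a b c d : L, s a b → s c d → s (a ⊔ c) (b ⊔ d) ∧ s (a ⊓ c) (b ⊓ d)}

/-- The congruence lattice order: inclusion of congruences. -/
instance (L : Type) [Lattice L] : PartialOrder (LatCon L) where
  le α β := ∀ x y : L, α.1 x y → β.1 x y
  le_refl _ _ _ h := h
  le_trans _ _ _ h1 h2 x y h := h2 x y (h1 x y h)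
  le_antisymm α β h1 h2 :=
    Subtype.ext (Setoid.ext fun x y => ⟨h1 x y, h2 x y⟩)

/-- A lattice is (upper) semimodular: `a ⋖ b` and `a ≤ c` imply `a ⊔ c ⪯ b ⊔ c`. -/
def IsSemimodular (L : Type) [Lattice L] : Prop :=
  ∀ a b c : L, a ⋖ b → a ≤ c → (a ⊔ c = b ⊔ c ∨ (a ⊔ c) ⋖ (b ⊔ c))

/-- A lattice is slim if its nonzero join-irreducibles form the union of two chains. -/
def IsSlim (L : Type) [Lattice L] : Prop :=
  ∃ C C' : Set L, IsChain (· ≤ ·) C ∧ IsChain (· ≤ ·) C' ∧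
    {a : L | SupIrred a} ⊆ C ∪ C'

/-- A slim planar semimodular (SPS) lattice: a finite semimodular lattice whose poset of
nonzero join-irreducibles is a union of two chains (slimness implies planarity). -/
def IsSPS (L : Type) [Lattice L] : Prop := IsSemimodular L ∧ IsSlim L

/-- `D` is order-isomorphic to the congruence lattice of `L`. -/
def ConIso (D L : Type) [Lattice D] [Lattice L] : Prop :=
  Nonempty (D ≃o LatCon L)

/-- `D` is CSPS-representable: isomorphic to the congruence lattice of some slim planar
semimodular lattice. -/
def IsCSPS (D : Type) [Lattice D] : Prop :=
  ∃ (L : Type) (iL : Lattice L) (_ : Fintype L), @IsSPS L iL ∧ @ConIso D L _ iL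

section FiniteLattice

variable {α : Type*} [Lattice α] [Finite α] {s : Set α}

theorem SupClosed.exists_isGreatest (hs : SupClosed s) (hne : s.Nonempty) :
    ∃ a, IsGreatest s a := by
  obtain ⟨a, ha⟩ := s.toFinite.exists_maximal hne
  exact ⟨a, ha.prop, fun y hy => le_sup_right.trans (ha.2 (hs ha.prop hy) le_sup_left)⟩

theorem InfClosed.exists_isLeast (hs : InfClosed s) (hne : s.Nonempty) :
    ∃ a, IsLeast s a := by
  obtain ⟨a, ha⟩ := s.toFinite.exists_minimal hne
  exact ⟨a, ha.prop, fun y hy => (ha.2 (hs ha.prop hy) inf_le_left).trans inf_le_right⟩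

end FiniteLattice

theorem WCovBy.map_of_surjective {α β F : Type*} [Lattice α] [Lattice β] [FunLike F α β]
    [LatticeHomClass F α β] {f : F} (hf : Function.Surjective f) {a b : α} (hab : a ⩿ b) :
    f a ⩿ f b := by
  refine ⟨OrderHomClass.mono f hab.le, fun z hza hzb => ?_⟩
  obtain ⟨z, rfl⟩ := hf z
  -- `b ⊓ (a ⊔ z)` lies between `a` and `b` and has the same image as `z`.
  have hz : f (b ⊓ (a ⊔ z)) = f z := by
    rw [map_inf, map_sup, sup_eq_right.2 hza.le, inf_eq_right.2 hzb.le]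
  rcases hab.eq_or_eq (le_inf hab.le le_sup_left) inf_le_left with h | h
  · exact hza.ne (by rwa [h] at hz)
  · exact hzb.ne (by rwa [h, eq_comm] at hz)

theorem isSemimodular_iff_wcovBy {L : Type} [Lattice L] :
    IsSemimodular L ↔ ∀ a b c : L, a ⋖ b → a ≤ c → a ⊔ c ⩿ b ⊔ c := by
  simp only [IsSemimodular, wcovBy_iff_covBy_or_eq, or_comm]

section SurjectiveLatticeHom

variable {L M F : Type} [Lattice L] [Lattice M] [FunLike F L M] [LatticeHomClass F L M]
  {f : F}

theorem SupIrred.of_isLeast_fiber (hf : Function.Surjective f) {y : M} (hy : SupIrred y)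
    {a : L} (ha : IsLeast {x | f x = y} a) : SupIrred a := by
  refine ⟨fun hmin => hy.1 fun z _ => ?_, fun b c hbc => ?_⟩
  · obtain ⟨z, rfl⟩ := hf z
    rw [← ha.1]
    exact OrderHomClass.mono f (inf_eq_left.1 (hmin.eq_of_le inf_le_left))
  · have hy' : f b ⊔ f c = y := by rw [← map_sup, hbc, ha.1]
    exact (hy.2 hy').imp (fun h => (hbc ▸ le_sup_left).antisymm (ha.2 h))
      (fun h => (hbc ▸ le_sup_right).antisymm (ha.2 h))

variable [Finite L]

theorem IsSemimodular.of_surjective (hf : Function.Surjective f) (hL : IsSemimodular L) :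
    IsSemimodular M := by
  rw [isSemimodular_iff_wcovBy] at hL ⊢
  intro A B C hAB hAC
  obtain ⟨a, rfl, ha⟩ := SupClosed.exists_isGreatest (s := {x | f x = A})
    (fun x hx y hy => by simp_all [map_sup]) (hf A)
  obtain ⟨b₀, rfl⟩ := hf B
  obtain ⟨c, rfl⟩ := hf C
  have hfab₀ : f (a ⊔ b₀) = f b₀ := by rw [map_sup, sup_eq_right.2 hAB.le]
  have hab₀ : a < a ⊔ b₀ := le_sup_left.lt_of_ne fun h => hAB.ne (by rw [h, hfab₀])
  obtain ⟨b, hab, hb⟩ := exists_covBy_le_of_lt hab₀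
  -- `a` is the top of its fiber, so the cover `a ⋖ b` leaves it.
  have hfb : f b = f b₀ := by
    have hlt : f a < f b :=
      (OrderHomClass.mono f hab.le).lt_of_ne fun h => hab.lt.not_ge (ha h.symm)
    exact ((OrderHomClass.mono f hb).trans_eq hfab₀).lt_or_eq.resolve_left (hAB.2 hlt)
  simpa [map_sup, hfb, sup_eq_right.2 hAC] using
    (hL a b (a ⊔ c) hab le_sup_left).map_of_surjective hf

theorem IsSlim.of_surjective (hf : Function.Surjective f) (hL : IsSlim L) : IsSlim M := by
  obtain ⟨C, C', hC, hC', hsub⟩ := hL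
  refine ⟨f '' C, f '' C', hC.image f, hC'.image f, fun y hy => ?_⟩
  obtain ⟨a, ha⟩ := InfClosed.exists_isLeast (s := {x | f x = y})
    (fun x hx z hz => by simp_all [map_inf]) (hf y)
  exact (hsub (hy.of_isLeast_fiber hf ha)).imp (fun h => ⟨a, h, ha.1⟩) (fun h => ⟨a, h, ha.1⟩)

theorem IsSPS.of_surjective (hf : Function.Surjective f) (hL : IsSPS L) : IsSPS M :=
  ⟨hL.1.of_surjective hf, hL.2.of_surjective hf⟩

end SurjectiveLatticeHom

def OrderIso.restrictIci {α β : Type*} [Preorder α] [Preorder β] (e : α ≃o β) (a : α) :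
    Set.Ici a ≃o Set.Ici (e a) :=
  { e.toEquiv.subtypeEquiv fun _ => e.le_iff_le.symm with map_rel_iff' := e.le_iff_le }

namespace LatCon

variable {L : Type} [Lattice L] (θ : LatCon L)

protected def Quotient : Type := _root_.Quotient θ.1

instance : Max θ.Quotient := ⟨Quotient.map₂ (· ⊔ ·) fun _ _ ha _ _ hb => (θ.2 _ _ _ _ ha hb).1⟩

instance : Min θ.Quotient := ⟨Quotient.map₂ (· ⊓ ·) fun _ _ ha _ _ hb => (θ.2 _ _ _ _ ha hb).2⟩

instance : Lattice θ.Quotient := Lattice.mk'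
  (by rintro ⟨a⟩ ⟨b⟩; exact congrArg (Quotient.mk _) (sup_comm a b))
  (by rintro ⟨a⟩ ⟨b⟩ ⟨c⟩; exact congrArg (Quotient.mk _) (sup_assoc a b c))
  (by rintro ⟨a⟩ ⟨b⟩; exact congrArg (Quotient.mk _) (inf_comm a b))
  (by rintro ⟨a⟩ ⟨b⟩ ⟨c⟩; exact congrArg (Quotient.mk _) (inf_assoc a b c))
  (by rintro ⟨a⟩ ⟨b⟩; exact congrArg (Quotient.mk _) sup_inf_self)
  (by rintro ⟨a⟩ ⟨b⟩; exact congrArg (Quotient.mk _) inf_sup_self)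

instance [Finite L] : Finite θ.Quotient := Quotient.finite θ.1

def mk : LatticeHom L θ.Quotient where
  toFun := Quotient.mk θ.1
  map_sup' _ _ := rfl
  map_inf' _ _ := rfl

theorem mk_surjective : Function.Surjective (mk θ) := Quotient.mk_surjective

theorem mk_eq_mk {a b : L} : mk θ a = mk θ b ↔ θ.1 a b := Quotient.eq

def comap (ρ : LatCon θ.Quotient) : LatCon L :=
  ⟨ρ.1.comap (mk θ), fun _ _ _ _ hab hcd => ρ.2 _ _ _ _ hab hcd⟩

def map (ψ : LatCon L) (hψ : θ ≤ ψ) : LatCon θ.Quotient where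
  val :=
    { r := Quotient.lift₂ ψ.1 fun _ _ _ _ ha hb => propext
        ⟨fun h => ψ.1.trans (ψ.1.symm (hψ _ _ ha)) (ψ.1.trans h (hψ _ _ hb)),
          fun h => ψ.1.trans (hψ _ _ ha) (ψ.1.trans h (ψ.1.symm (hψ _ _ hb)))⟩
      iseqv :=
        ⟨by rintro ⟨a⟩; exact ψ.1.refl a,
          by rintro ⟨a⟩ ⟨b⟩; exact ψ.1.symm,
          by rintro ⟨a⟩ ⟨b⟩ ⟨c⟩; exact ψ.1.trans⟩ }
  property := by rintro ⟨a⟩ ⟨b⟩ ⟨c⟩ ⟨d⟩; exact ψ.2 a b c d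

def correspondence : Set.Ici θ ≃o LatCon θ.Quotient where
  toFun ψ := θ.map ψ.1 ψ.2
  invFun ρ := ⟨θ.comap ρ, fun a b h => by
    show ρ.1 (mk θ a) (mk θ b)
    rw [(mk_eq_mk θ).2 h]⟩
  left_inv ψ := Subtype.ext (Subtype.ext (Setoid.ext fun _ _ => Iff.rfl))
  right_inv ρ := Subtype.ext (Setoid.ext (by rintro ⟨a⟩ ⟨b⟩; rfl))
  map_rel_iff' := ⟨fun h a b => h (mk θ a) (mk θ b), fun h => by rintro ⟨a⟩ ⟨b⟩; exact h a b⟩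

end LatCon

theorem no_filter_iso_of_not_CSPS_general
    {D E : Type} [DistribLattice D] [DistribLattice E]
    (hE : ¬ IsCSPS E) (hD : IsCSPS D) :
    ∀ u : D, IsEmpty ((Set.Ici u) ≃o E) := by
  intro u
  refine ⟨fun e => hE ?_⟩
  obtain ⟨L, _, _, hL, ⟨g⟩⟩ := hD
  exact ⟨(g u).Quotient, inferInstance, Fintype.ofFinite _,
    hL.of_surjective (LatCon.mk_surjective (g u)),
    ⟨e.symm.trans ((g.restrictIci u).trans (g u).correspondence)⟩⟩

/-- Let `E` be a finite distributive lattice that is not isomorphic to the congruence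
lattice of any SPS lattice.  If the finite distributive lattice `D` is isomorphic to the
congruence lattice of some SPS lattice, then no principal filter of `D` is isomorphic to
`E`. -/
theorem no_filter_iso_of_not_CSPS
    {D E : Type} [DistribLattice D] [Fintype D] [DistribLattice E] [Fintype E]
    (hE : ¬ IsCSPS E) (hD : IsCSPS D) :
    ∀ u : D, IsEmpty ((Set.Ici u) ≃o E) :=
  no_filter_iso_of_not_CSPS_general hE hD
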